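/- Let r ∈ (0,1] and f : [a,b] → ℝ be of r-bounded variation. Then f can be written as the difference of two nondecreasing functions; specifically, both (v_f)^{1/r} and (v_f)^{1/r} - f are nondecreasing, where v_f(x) = V^r_{[a,x]}(f). -/

import Mathlib

/-!
Appending the point `y` to a partition of `[a, x]` shows `v(x) + |f y - f x| ^ r ≤ v(y)` for the
`r`-variation `v(x) = V^r_{[a,x]}(f)`. Since `t ↦ t ^ (1/r)` is superadditive on `[0, ∞)` for `r ≤ 1`,
this gives `v(x) ^ (1/r) + |f y - f x| ≤ v(y) ^ (1/r)`, from which both `v ^ (1/r)` and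
`v ^ (1/r) - f` are nondecreasing.
-/

/-- The set of `r`-variation sums of `f` over partitions of `[a,b]`. -/
def rVarSums (r a b : ℝ) (f : ℝ → ℝ) : Set ℝ :=
  {s | ∃ (n : ℕ) (x : ℕ → ℝ), x 0 = a ∧ x n = b ∧ (∀ i, i < n → x i < x (i + 1)) ∧
    s = ∑ i ∈ Finset.range n, |f (x (i + 1)) - f (x i)| ^ r}

section rVarSums

variable {r a b x y : ℝ} {f : ℝ → ℝ}

lemma rVarSums_nonempty (hx : a ≤ x) : (rVarSums r a x f).Nonempty := by
  rcases hx.eq_or_lt with rfl | hax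
  · exact ⟨0, 0, fun _ => a, rfl, rfl, fun i hi => absurd hi i.not_lt_zero, by simp⟩
  · refine ⟨|f x - f a| ^ r, 1, fun i => if i = 0 then a else x, by simp, by simp, ?_, by simp⟩
    intro i hi
    obtain rfl : i = 0 := by omega
    simpa using hax

lemma add_mem_rVarSums (hxy : x < y) {s : ℝ} (hs : s ∈ rVarSums r a x f) :
    s + |f y - f x| ^ r ∈ rVarSums r a y f := by
  obtain ⟨n, p, hp0, hpn, hpmono, rfl⟩ := hs
  have hp_lt (i : ℕ) (hi : i ≤ n) : Function.update p (n + 1) y i = p i :=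
    Function.update_of_ne (by omega) _ _
  refine ⟨n + 1, Function.update p (n + 1) y, by rw [hp_lt 0 (Nat.zero_le n), hp0],
    Function.update_self .., fun i hi => ?_, ?_⟩
  · rcases Nat.lt_succ_iff_lt_or_eq.mp hi with hin | rfl
    · rw [hp_lt i hin.le, hp_lt (i + 1) hin]
      exact hpmono i hin
    · rw [hp_lt i le_rfl, Function.update_self, hpn]
      exact hxy
  · rw [Finset.sum_range_succ, Function.update_self, hp_lt n le_rfl, hpn]
    congr 1
    refine Finset.sum_congr rfl fun i hi => ?_
    have hin := Finset.mem_range.mp hi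
    rw [hp_lt i hin.le, hp_lt (i + 1) hin]

lemma bddAbove_rVarSums_of_le (hbv : BddAbove (rVarSums r a b f)) (hxb : x ≤ b) :
    BddAbove (rVarSums r a x f) := by
  rcases hxb.eq_or_lt with rfl | hxb
  · exact hbv
  obtain ⟨M, hM⟩ := hbv
  refine ⟨M, fun s hs => ?_⟩
  have hsum := hM (add_mem_rVarSums hxb hs)
  have hterm : 0 ≤ |f b - f x| ^ r := by positivity
  linarith

lemma sSup_rVarSums_nonneg : 0 ≤ sSup (rVarSums r a x f) := by
  refine Real.sSup_nonneg fun s hs => ?_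
  obtain ⟨n, p, -, -, -, rfl⟩ := hs
  positivity

lemma sSup_rVarSums_add_le (hy : BddAbove (rVarSums r a y f)) (hx : a ≤ x) (hxy : x < y) :
    sSup (rVarSums r a x f) + |f y - f x| ^ r ≤ sSup (rVarSums r a y f) := by
  rw [← le_sub_iff_add_le]
  refine csSup_le (rVarSums_nonempty hx) fun s hs => ?_
  rw [le_sub_iff_add_le]
  exact le_csSup hy (add_mem_rVarSums hxy hs)

lemma rpow_sSup_rVarSums_add_abs_le (hr : 0 < r) (hr1 : r ≤ 1)
    (hy : BddAbove (rVarSums r a y f)) (hx : a ≤ x) (hxy : x ≤ y) :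
    sSup (rVarSums r a x f) ^ (1 / r) + |f y - f x| ≤ sSup (rVarSums r a y f) ^ (1 / r) := by
  rcases hxy.eq_or_lt with rfl | hxy
  · simp
  have h1r : 1 ≤ 1 / r := by rwa [le_div_iff₀ hr, one_mul]
  calc sSup (rVarSums r a x f) ^ (1 / r) + |f y - f x|
      = sSup (rVarSums r a x f) ^ (1 / r) + (|f y - f x| ^ r) ^ (1 / r) := by
        rw [← Real.rpow_mul (abs_nonneg _), mul_one_div_cancel hr.ne', Real.rpow_one]
    _ ≤ (sSup (rVarSums r a x f) + |f y - f x| ^ r) ^ (1 / r) :=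
        Real.add_rpow_le_rpow_add sSup_rVarSums_nonneg (by positivity) h1r
    _ ≤ sSup (rVarSums r a y f) ^ (1 / r) :=
        Real.rpow_le_rpow (add_nonneg sSup_rVarSums_nonneg (by positivity))
          (sSup_rVarSums_add_le hy hx hxy) (by positivity)

end rVarSums

theorem stmt_12_general (r a b : ℝ) (hr : 0 < r) (hr1 : r ≤ 1) (f : ℝ → ℝ)
    (hbv : BddAbove (rVarSums r a b f)) :
    MonotoneOn (fun x => (sSup (rVarSums r a x f)) ^ (1 / r)) (Set.Icc a b) ∧
    MonotoneOn (fun x => (sSup (rVarSums r a x f)) ^ (1 / r) - f x) (Set.Icc a b) ∧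
    ∃ g h : ℝ → ℝ, MonotoneOn g (Set.Icc a b) ∧ MonotoneOn h (Set.Icc a b) ∧
      ∀ x ∈ Set.Icc a b, f x = g x - h x := by
  have hstep {x y : ℝ} (hx : x ∈ Set.Icc a b) (hy : y ∈ Set.Icc a b) (hxy : x ≤ y) :
      sSup (rVarSums r a x f) ^ (1 / r) + |f y - f x| ≤ sSup (rVarSums r a y f) ^ (1 / r) :=
    rpow_sSup_rVarSums_add_abs_le hr hr1 (bddAbove_rVarSums_of_le hbv hy.2) hx.1 hxy
  have hmono : MonotoneOn (fun x => (sSup (rVarSums r a x f)) ^ (1 / r)) (Set.Icc a b) :=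
    fun x hx y hy hxy => by
      linarith [hstep hx hy hxy, abs_nonneg (f y - f x)]
  have hmono_sub :
      MonotoneOn (fun x => (sSup (rVarSums r a x f)) ^ (1 / r) - f x) (Set.Icc a b) :=
    fun x hx y hy hxy => by
      linarith [hstep hx hy hxy, le_abs_self (f y - f x)]
  exact ⟨hmono, hmono_sub, _, _, hmono, hmono_sub, fun x _ => by ring⟩

theorem stmt_12 (r a b : ℝ) (hr : 0 < r) (hr1 : r ≤ 1) (hab : a < b) (f : ℝ → ℝ)
    (hbv : BddAbove (rVarSums r a b f)) :
    MonotoneOn (fun x => (sSup (rVarSums r a x f)) ^ (1 / r)) (Set.Icc a b) ∧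
    MonotoneOn (fun x => (sSup (rVarSums r a x f)) ^ (1 / r) - f x) (Set.Icc a b) ∧
    ∃ g h : ℝ → ℝ, MonotoneOn g (Set.Icc a b) ∧ MonotoneOn h (Set.Icc a b) ∧
      ∀ x ∈ Set.Icc a b, f x = g x - h x :=
  stmt_12_general r a b hr hr1 f hbv
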